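/- arXiv:1607.05721 — 9 statements merged into one kernel-verified Lean document; each statement's English description precedes it below -/
import Mathlib

section
/- Let d_MUSTA₁(ν) = 1/4 + ν² − ν⁴/4. For every real ν one has the identity d_MUSTA₁(ν) − |ν| = −(1/4)·(|ν| − 1)²·(ν² + 2|ν| − 1). Consequently, d_MUSTA₁(ν) < |ν| whenever √2 − 1 < |ν| < 1, and d_MUSTA₁(ν) ≥ |ν| whenever |ν| ≤ √2 − 1; i.e. the MUSTA₁ dissipation function drops below the upwind dissipation function |ν| exactly for the larger Courant numbers √2 − 1 < |ν| < 1. -/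
/-- The scalar dissipation function of the MUSTA₁ scheme. -/
noncomputable def dMUSTA1 (ν : ℝ) : ℝ := 1/4 + ν^2 - ν^4/4

/-!
`dMUSTA1` is even, so it suffices to compare it with the identity on `t = |ν| ≥ 0`, where
`dMUSTA1 t - t = -(1/4) (t - 1)² (t² + 2t - 1)`. The quadratic factor has roots `-1 ± √2`,
so for `t ≥ 0` its sign flips exactly at `t = √2 - 1`, while `(t - 1)²` vanishes only at `t = 1`.
-/

lemma dMUSTA1_abs (ν : ℝ) : dMUSTA1 |ν| = dMUSTA1 ν := by
  rw [dMUSTA1, dMUSTA1, sq_abs, (by decide : Even 4).pow_abs]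

lemma dMUSTA1_sub_self (t : ℝ) :
    dMUSTA1 t - t = -(1/4) * (t - 1)^2 * (t^2 + 2*t - 1) := by
  unfold dMUSTA1; ring

lemma sq_add_two_mul_sub_one_eq (t : ℝ) :
    t^2 + 2*t - 1 = (t - (Real.sqrt 2 - 1)) * (t + (Real.sqrt 2 + 1)) := by
  have hsqrt : Real.sqrt 2 ^ 2 = 2 := Real.sq_sqrt zero_le_two
  linear_combination hsqrt

lemma dMUSTA1_lt_self {t : ℝ} (hlow : Real.sqrt 2 - 1 < t) (hhigh : t < 1) :
    dMUSTA1 t < t := by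
  have hquad : 0 < t^2 + 2*t - 1 := by
    rw [sq_add_two_mul_sub_one_eq]
    exact mul_pos (by linarith) (by linarith [Real.sqrt_nonneg 2])
  have hsq : 0 < (t - 1)^2 := by nlinarith
  nlinarith [dMUSTA1_sub_self t, mul_pos hsq hquad]

lemma self_le_dMUSTA1 {t : ℝ} (hnonneg : 0 ≤ t) (hle : t ≤ Real.sqrt 2 - 1) :
    t ≤ dMUSTA1 t := by
  have hquad : t^2 + 2*t - 1 ≤ 0 := by
    rw [sq_add_two_mul_sub_one_eq]
    exact mul_nonpos_of_nonpos_of_nonneg (by linarith) (by positivity)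
  nlinarith [dMUSTA1_sub_self t, mul_nonpos_of_nonneg_of_nonpos (sq_nonneg (t - 1)) hquad]

/-- Identity for `dMUSTA₁(ν) − |ν|`; consequently MUSTA₁ drops below the upwind
dissipation exactly for the larger Courant numbers `√2 − 1 < |ν| < 1`, and stays
above it for `|ν| ≤ √2 − 1`. -/
theorem musta1_vs_upwind (ν : ℝ) :
    dMUSTA1 ν - |ν| = -(1/4) * (|ν| - 1)^2 * (ν^2 + 2*|ν| - 1) ∧
    (Real.sqrt 2 - 1 < |ν| → |ν| < 1 → dMUSTA1 ν < |ν|) ∧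
    (|ν| ≤ Real.sqrt 2 - 1 → |ν| ≤ dMUSTA1 ν) := by
  rw [← dMUSTA1_abs, ← sq_abs ν]
  exact ⟨dMUSTA1_sub_self |ν|, dMUSTA1_lt_self, self_le_dMUSTA1 (abs_nonneg ν)⟩
end

section
/- Let ν_min < ν_max be real numbers, let α = (ν_max − ν_min − | |ν_max| − |ν_min| |)/(ν_max − ν_min)², and let d_HLLX(ν) = d_HLL(ν) + α·(ν − ν_min)(ν − ν_max). Let ν̄ = ν_max if |ν_max| ≥ |ν_min| and ν̄ = ν_min otherwise. Then d_HLLX(ν_min) = |ν_min|, d_HLLX(ν_max) = |ν_max|, and the derivative satisfies d_HLLX′(ν̄) = sign(ν̄); i.e. the HLLX (P₂) dissipation function matches the upwind dissipation |ν| in value at both extreme wave speeds and in slope at the globally fastest wave speed. -/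
/-- The HLL scalar dissipation function for wave speeds `νmin < νmax`. -/
noncomputable def dHLL (νmin νmax ν : ℝ) : ℝ :=
  (|νmin| * νmax - |νmax| * νmin) / (νmax - νmin)
    + ((|νmax| - |νmin|) / (νmax - νmin)) * ν

/-- The HLLX coefficient `α`. -/
noncomputable def alphaHLLX (νmin νmax : ℝ) : ℝ :=
  (νmax - νmin - |(|νmax| - |νmin|)|) / (νmax - νmin)^2

/-- The HLLX (P₂) scalar dissipation function. -/
noncomputable def dHLLX (νmin νmax ν : ℝ) : ℝ :=
  dHLL νmin νmax ν + alphaHLLX νmin νmax * (ν - νmin) * (ν - νmax)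

/-- The globally fastest Courant number. -/
noncomputable def nuBar (νmin νmax : ℝ) : ℝ :=
  if |νmax| ≥ |νmin| then νmax else νmin

/-!
`d_HLL` is the chord of `|ν|` through the extreme wave speeds and the added parabola vanishes
there, so `d_HLLX` still interpolates `|ν|` at both ends. With `s` the chord slope,
`α (ν_max - ν_min) = 1 - |s|`, so the end slopes of `d_HLLX` are `s ± (1 - |s|)`: this is `1` at
`ν_max` when `s ≥ 0` and `-1` at `ν_min` when `s < 0`, and in these cases `ν̄ = ν_max > 0`,
resp. `ν̄ = ν_min < 0`.
-/

section

variable {a b : ℝ}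

lemma dHLL_left (hab : a ≠ b) : dHLL a b a = |a| := by
  have : b - a ≠ 0 := sub_ne_zero.mpr hab.symm
  unfold dHLL
  field_simp
  ring

lemma dHLL_right (hab : a ≠ b) : dHLL a b b = |b| := by
  have : b - a ≠ 0 := sub_ne_zero.mpr hab.symm
  unfold dHLL
  field_simp
  ring

lemma dHLLX_left (hab : a ≠ b) : dHLLX a b a = |a| := by
  simp [dHLLX, dHLL_left hab]

lemma dHLLX_right (hab : a ≠ b) : dHLLX a b b = |b| := by
  simp [dHLLX, dHLL_right hab]

lemma hasDerivAt_dHLLX (x : ℝ) :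
    HasDerivAt (dHLLX a b)
      ((|b| - |a|) / (b - a) + alphaHLLX a b * ((x - a) + (x - b))) x := by
  have hchord : HasDerivAt (dHLL a b) ((|b| - |a|) / (b - a)) x :=
    (((hasDerivAt_id' x).const_mul ((|b| - |a|) / (b - a))).const_add
      ((|a| * b - |b| * a) / (b - a))).congr_deriv (mul_one _)
  have hparabola : HasDerivAt (fun ν ↦ alphaHLLX a b * (ν - a) * (ν - b))
      (alphaHLLX a b * ((x - a) + (x - b))) x :=
    ((((hasDerivAt_id' x).sub_const a).const_mul (alphaHLLX a b)).mul
      ((hasDerivAt_id' x).sub_const b)).congr_deriv (by ring)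
  exact hchord.add hparabola

lemma deriv_dHLLX_right (hab : a < b) (habs : |a| ≤ |b|) : deriv (dHLLX a b) b = 1 := by
  have : b - a ≠ 0 := sub_ne_zero.mpr hab.ne'
  rw [(hasDerivAt_dHLLX b).deriv, alphaHLLX, abs_of_nonneg (sub_nonneg.mpr habs)]
  field_simp
  ring

lemma deriv_dHLLX_left (hab : a < b) (habs : |b| < |a|) : deriv (dHLLX a b) a = -1 := by
  have : b - a ≠ 0 := sub_ne_zero.mpr hab.ne'
  rw [(hasDerivAt_dHLLX a).deriv, alphaHLLX, abs_of_neg (sub_neg.mpr habs)]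
  field_simp
  ring

lemma pos_of_lt_of_abs_le_abs (hab : a < b) (habs : |a| ≤ |b|) : 0 < b := by
  cases abs_cases a <;> cases abs_cases b <;> linarith

lemma neg_of_lt_of_abs_lt_abs (hab : a < b) (habs : |b| < |a|) : a < 0 := by
  cases abs_cases a <;> cases abs_cases b <;> linarith

end

/-- The HLLX dissipation matches the upwind dissipation `|ν|` in value at both
extreme wave speeds and in slope at the globally fastest wave speed. -/
theorem hllx_P2_conditions (νmin νmax : ℝ) (h : νmin < νmax) :
    dHLLX νmin νmax νmin = |νmin| ∧ dHLLX νmin νmax νmax = |νmax| ∧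
      deriv (dHLLX νmin νmax) (nuBar νmin νmax) = Real.sign (nuBar νmin νmax) := by
  refine ⟨dHLLX_left h.ne, dHLLX_right h.ne, ?_⟩
  unfold nuBar
  split_ifs with habs
  · rw [deriv_dHLLX_right h habs, Real.sign_of_pos (pos_of_lt_of_abs_le_abs h habs)]
  · rw [not_le] at habs
    rw [deriv_dHLLX_left h habs, Real.sign_of_neg (neg_of_lt_of_abs_lt_abs h habs)]
end

section
/- Let ν_min < ν_max be real numbers and let ν̄ = ν_max if |ν_max| ≥ |ν_min|, else ν̄ = ν_min. There exists exactly one polynomial q of degree at most 2 satisfying the three conditions q(ν_min) = |ν_min|, q(ν_max) = |ν_max|, and q′(ν̄) = sign(ν̄), namely q(ν) = d_HLLX(ν) = d_HLL(ν) + α·(ν − ν_min)(ν − ν_max); i.e. the P₂ requirements fully determine the quadratic HLLX dissipation function. -/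
open Polynomial

theorem Polynomial.eq_zero_of_degree_le_two_of_isRoot_derivative {K : Type*} [Field K]
    {p : K[X]} {a b : K} (hp : p.degree ≤ 2) (hab : a ≠ b) (ha : p.IsRoot a)
    (ha' : p.derivative.IsRoot a) (hb : p.IsRoot b) : p = 0 := by
  by_contra hp0
  have hdouble : (X - C a) ^ 2 ∣ p :=
    (le_rootMultiplicity_iff hp0).1 ((one_lt_rootMultiplicity_iff_isRoot hp0).2 ⟨ha, ha'⟩)
  have hcop : IsCoprime ((X - C a) ^ 2) (X - C b) :=
    (isCoprime_X_sub_C_of_isUnit_sub (sub_ne_zero.2 hab).isUnit).pow_left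
  have hcubic : (X - C a) ^ 2 * (X - C b) ∣ p := hcop.mul_dvd hdouble (dvd_iff_isRoot.2 hb)
  have h3 := (degree_le_of_dvd hcubic hp0).trans hp
  rw [degree_mul, degree_pow, degree_X_sub_C, degree_X_sub_C] at h3
  exact absurd h3 (by decide)

theorem pos_of_lt_of_abs_le_abs_s6 {α : Type*} [AddCommGroup α] [LinearOrder α]
    [IsOrderedAddMonoid α] {a b : α} (h : a < b) (hab : |a| ≤ |b|) : 0 < b := by
  by_contra! hb
  rw [abs_of_neg (h.trans_le hb), abs_of_nonpos hb] at hab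
  exact absurd hab (not_le.2 (neg_lt_neg h))

theorem neg_of_lt_of_abs_lt_abs_s6 {α : Type*} [AddCommGroup α] [LinearOrder α]
    [IsOrderedAddMonoid α] {a b : α} (h : a < b) (hab : |b| < |a|) : a < 0 :=
  neg_pos.1 (pos_of_lt_of_abs_le_abs_s6 (neg_lt_neg h) (by simpa only [abs_neg] using hab.le))

theorem nuBar_eq_or (νmin νmax : ℝ) : nuBar νmin νmax = νmax ∨ nuBar νmin νmax = νmin := by
  unfold nuBar
  split_ifs <;> simp

theorem dHLL_left_s6 {νmin νmax : ℝ} (h : νmin ≠ νmax) : dHLL νmin νmax νmin = |νmin| := by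
  have : νmax - νmin ≠ 0 := sub_ne_zero.2 h.symm
  unfold dHLL
  field_simp
  ring

theorem dHLL_right_s6 {νmin νmax : ℝ} (h : νmin ≠ νmax) : dHLL νmin νmax νmax = |νmax| := by
  have : νmax - νmin ≠ 0 := sub_ne_zero.2 h.symm
  unfold dHLL
  field_simp
  ring

def SatisfiesP2Requirements (νmin νmax : ℝ) (q : ℝ[X]) : Prop :=
  q.degree ≤ 2 ∧ q.eval νmin = |νmin| ∧ q.eval νmax = |νmax| ∧
    q.derivative.eval (nuBar νmin νmax) = Real.sign (nuBar νmin νmax)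

theorem SatisfiesP2Requirements.eq {νmin νmax : ℝ} {p q : ℝ[X]} (h : νmin ≠ νmax)
    (hp : SatisfiesP2Requirements νmin νmax p) (hq : SatisfiesP2Requirements νmin νmax q) :
    p = q := by
  obtain ⟨hp_deg, hp_min, hp_max, hp_bar⟩ := hp
  obtain ⟨hq_deg, hq_min, hq_max, hq_bar⟩ := hq
  rw [← sub_eq_zero]
  have hdeg : (p - q).degree ≤ 2 := (degree_sub_le p q).trans (max_le hp_deg hq_deg)
  have hmin : (p - q).IsRoot νmin := by simp [hp_min, hq_min]
  have hmax : (p - q).IsRoot νmax := by simp [hp_max, hq_max]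
  have hbar : (p - q).derivative.IsRoot (nuBar νmin νmax) := by simp [hp_bar, hq_bar]
  rcases nuBar_eq_or νmin νmax with hν | hν <;> rw [hν] at hbar
  · exact eq_zero_of_degree_le_two_of_isRoot_derivative hdeg h.symm hmax hbar hmin
  · exact eq_zero_of_degree_le_two_of_isRoot_derivative hdeg h hmin hbar hmax

noncomputable def hllxPoly (νmin νmax : ℝ) : ℝ[X] :=
  C ((|νmin| * νmax - |νmax| * νmin) / (νmax - νmin)) + C ((|νmax| - |νmin|) / (νmax - νmin)) * X
    + C (alphaHLLX νmin νmax) * (X - C νmin) * (X - C νmax)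

theorem eval_hllxPoly (νmin νmax ν : ℝ) : (hllxPoly νmin νmax).eval ν = dHLLX νmin νmax ν := by
  simp [hllxPoly, dHLLX, dHLL]

theorem degree_hllxPoly_le (νmin νmax : ℝ) : (hllxPoly νmin νmax).degree ≤ 2 := by
  unfold hllxPoly
  compute_degree

theorem eval_derivative_hllxPoly (νmin νmax ν : ℝ) :
    (hllxPoly νmin νmax).derivative.eval ν =
      (|νmax| - |νmin|) / (νmax - νmin) + alphaHLLX νmin νmax * ((ν - νmax) + (ν - νmin)) := by
  simp only [hllxPoly, derivative_add, derivative_C, derivative_mul, zero_mul, derivative_X, mul_one,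
    zero_add, derivative_sub, sub_zero, eval_add, eval_C, eval_mul, eval_sub, eval_X, add_right_inj]
  ring

theorem eval_derivative_hllxPoly_right {νmin νmax : ℝ} (h : νmin ≠ νmax)
    (habs : |νmin| ≤ |νmax|) : (hllxPoly νmin νmax).derivative.eval νmax = 1 := by
  have : νmax - νmin ≠ 0 := sub_ne_zero.2 h.symm
  rw [eval_derivative_hllxPoly, alphaHLLX, abs_of_nonneg (sub_nonneg.2 habs)]
  field_simp
  ring

theorem eval_derivative_hllxPoly_left {νmin νmax : ℝ} (h : νmin ≠ νmax)
    (habs : |νmax| < |νmin|) : (hllxPoly νmin νmax).derivative.eval νmin = -1 := by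
  have : νmax - νmin ≠ 0 := sub_ne_zero.2 h.symm
  rw [eval_derivative_hllxPoly, alphaHLLX, abs_of_neg (sub_neg.2 habs)]
  field_simp
  ring

theorem satisfiesP2Requirements_hllxPoly {νmin νmax : ℝ} (h : νmin < νmax) :
    SatisfiesP2Requirements νmin νmax (hllxPoly νmin νmax) := by
  refine ⟨degree_hllxPoly_le νmin νmax, ?_, ?_, ?_⟩
  · simp [eval_hllxPoly, dHLLX, dHLL_left_s6 h.ne]
  · simp [eval_hllxPoly, dHLLX, dHLL_right_s6 h.ne]
  · unfold nuBar
    split_ifs with habs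
    · rw [eval_derivative_hllxPoly_right h.ne habs,
        Real.sign_of_pos (pos_of_lt_of_abs_le_abs_s6 h habs)]
    · push Not at habs
      rw [eval_derivative_hllxPoly_left h.ne habs,
        Real.sign_of_neg (neg_of_lt_of_abs_lt_abs_s6 h habs)]

/-- The P₂ requirements (two interpolation conditions and one slope condition)
determine a unique polynomial of degree at most 2, namely the HLLX dissipation
function. -/
theorem P2_requirements_determine_hllx (νmin νmax : ℝ) (h : νmin < νmax) :
    (∃! q : Polynomial ℝ, q.degree ≤ 2 ∧
        q.eval νmin = |νmin| ∧ q.eval νmax = |νmax| ∧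
        q.derivative.eval (nuBar νmin νmax) = Real.sign (nuBar νmin νmax)) ∧
    (∀ q : Polynomial ℝ, (q.degree ≤ 2 ∧
        q.eval νmin = |νmin| ∧ q.eval νmax = |νmax| ∧
        q.derivative.eval (nuBar νmin νmax) = Real.sign (nuBar νmin νmax)) →
      ∀ ν, q.eval ν = dHLLX νmin νmax ν) := by
  have hQ := satisfiesP2Requirements_hllxPoly h
  have huniq (q : ℝ[X]) (hq : SatisfiesP2Requirements νmin νmax q) : q = hllxPoly νmin νmax :=
    hq.eq h.ne hQ
  refine ⟨⟨hllxPoly νmin νmax, hQ, huniq⟩, fun q hq ν => ?_⟩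
  rw [huniq q hq, eval_hllxPoly]
end

section
/- Assume ν_min ≤ 0 ≤ ν_max and ν_min < ν_max, and set α = (ν_max − ν_min − | |ν_max| − |ν_min| |)/(ν_max − ν_min)², α₀ = α·|ν_min·ν_max|, α₁ = 1 − α·(|ν_max| + |ν_min|), α₂ = α. Then for every real ν the two representations of the HLLX dissipation function coincide: α₀·1 + α₁·d_HLL(ν) + α₂·ν² = d_HLL(ν) + α·(ν − ν_min)(ν − ν_max); i.e. HLLX is the weighted combination α₀·d_LF + α₁·d_HLL + α₂·d_LW of the Lax–Friedrichs, HLL, and Lax–Wendroff dissipation functions. -/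
/- For `νmin ≤ 0 ≤ νmax` we have `|νmax| + |νmin| = νmax - νmin`, so clearing the denominator of
`d_HLL` gives `(νmax - νmin) d_HLL(ν) = (νmin + νmax) ν - 2 νmin νmax`; the difference of the two
sides of the identity is `α` times this relation. -/

lemma sub_mul_dHLL {νmin νmax : ℝ} (h : νmin ≠ νmax) (ν : ℝ) :
    (νmax - νmin) * dHLL νmin νmax ν = |νmin| * νmax - |νmax| * νmin + (|νmax| - |νmin|) * ν := by
  have hd : νmax - νmin ≠ 0 := sub_ne_zero.mpr h.symm
  rw [dHLL, mul_add, mul_div_cancel₀ _ hd, ← mul_assoc, mul_div_cancel₀ _ hd]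

/-- HLLX is the weighted combination `α₀·d_LF + α₁·d_HLL + α₂·d_LW` of the
Lax–Friedrichs (`1`), HLL, and Lax–Wendroff (`ν²`) dissipation functions. -/
theorem hllx_weighted_combination (νmin νmax : ℝ)
    (hmin : νmin ≤ 0) (hmax : 0 ≤ νmax) (h : νmin < νmax) :
    ∀ ν : ℝ,
      (alphaHLLX νmin νmax * |νmin * νmax|) * 1
        + (1 - alphaHLLX νmin νmax * (|νmax| + |νmin|)) * dHLL νmin νmax ν
        + alphaHLLX νmin νmax * ν^2
      = dHLL νmin νmax ν + alphaHLLX νmin νmax * (ν - νmin) * (ν - νmax) := by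
  intro ν
  have hd := sub_mul_dHLL h.ne ν
  rw [abs_of_nonpos hmin, abs_of_nonneg hmax] at hd
  rw [abs_of_nonpos (mul_nonpos_of_nonpos_of_nonneg hmin hmax), abs_of_nonpos hmin,
    abs_of_nonneg hmax]
  linear_combination (-alphaHLLX νmin νmax) * hd
end

section
/- Let ν_min < ν_max be real numbers. For every ν ∈ [ν_min, ν_max], the HLLX dissipation function satisfies d_HLLX(ν) ≥ |ν|; i.e. the quadratic HLLX (P₂) dissipation function automatically lies above the upwind dissipation on the whole wave-speed interval, so the HLLX scheme is monotone there. -/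
section
variable {νmin νmax : ℝ}

theorem alphaHLLX_nonneg (h : νmin ≤ νmax) : 0 ≤ alphaHLLX νmin νmax := by
  have : |(|νmax| - |νmin|)| ≤ νmax - νmin := by
    simpa [abs_of_nonneg (sub_nonneg.2 h)] using abs_abs_sub_abs_le_abs_sub νmax νmin
  unfold alphaHLLX
  positivity

theorem dHLLX_of_nonneg (h : νmin < νmax) (h0 : 0 ≤ νmin) (ν : ℝ) : dHLLX νmin νmax ν = ν := by
  have hL : νmax - νmin ≠ 0 := sub_ne_zero.2 h.ne'
  simp only [dHLLX, dHLL, alphaHLLX, abs_of_nonneg h0, abs_of_nonneg (h0.trans h.le),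
    abs_of_nonneg (sub_nonneg.2 h.le), sub_self, zero_div, zero_mul, add_zero]
  field_simp
  ring

theorem dHLLX_of_nonpos (h : νmin < νmax) (h0 : νmax ≤ 0) (ν : ℝ) : dHLLX νmin νmax ν = -ν := by
  have hL : νmax - νmin ≠ 0 := sub_ne_zero.2 h.ne'
  simp only [dHLLX, dHLL, alphaHLLX, abs_of_nonpos h0, abs_of_nonpos (h.le.trans h0),
    show -νmax - -νmin = -(νmax - νmin) by ring, abs_neg,
    abs_of_nonneg (sub_nonneg.2 h.le), sub_self, zero_div, zero_mul, add_zero]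
  field_simp
  ring

theorem alphaHLLX_mul_sq_of_neg_of_pos (hmin : νmin < 0) (hmax : 0 < νmax) :
    alphaHLLX νmin νmax * (νmax - νmin) ^ 2 = 2 * min (-νmin) νmax := by
  have hL : νmax - νmin ≠ 0 := by linarith
  rw [alphaHLLX, abs_of_neg hmin, abs_of_pos hmax, div_mul_cancel₀ _ (pow_ne_zero 2 hL)]
  rcases le_total (-νmin) νmax with h | h
  · rw [min_eq_left h, abs_of_nonneg (by linarith)]; ring
  · rw [min_eq_right h, abs_of_nonpos (by linarith)]; ring

theorem dHLLX_sub_self_of_neg_of_pos (hmin : νmin < 0) (hmax : 0 < νmax) (ν : ℝ) :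
    dHLLX νmin νmax ν - ν =
      (νmax - ν) * (-2 * νmin / (νmax - νmin) - alphaHLLX νmin νmax * (ν - νmin)) := by
  have hL : νmax - νmin ≠ 0 := by linarith
  simp only [dHLLX, dHLL, abs_of_neg hmin, abs_of_pos hmax]
  field_simp
  ring

theorem dHLLX_add_self_of_neg_of_pos (hmin : νmin < 0) (hmax : 0 < νmax) (ν : ℝ) :
    dHLLX νmin νmax ν + ν =
      (ν - νmin) * (2 * νmax / (νmax - νmin) - alphaHLLX νmin νmax * (νmax - ν)) := by
  have hL : νmax - νmin ≠ 0 := by linarith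
  simp only [dHLLX, dHLL, abs_of_neg hmin, abs_of_pos hmax]
  field_simp
  ring

theorem abs_le_dHLLX_of_neg_of_pos (hmin : νmin < 0) (hmax : 0 < νmax) {ν : ℝ}
    (hν : ν ∈ Set.Icc νmin νmax) : |ν| ≤ dHLLX νmin νmax ν := by
  obtain ⟨hν₁, hν₂⟩ := hν
  have hL : 0 < νmax - νmin := by linarith
  have hα := alphaHLLX_nonneg (hmin.trans hmax).le
  have hαL := alphaHLLX_mul_sq_of_neg_of_pos hmin hmax
  refine abs_le'.2 ⟨sub_nonneg.1 ?_, neg_le_iff_add_nonneg.2 ?_⟩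
  · rw [dHLLX_sub_self_of_neg_of_pos hmin hmax]
    refine mul_nonneg (by linarith) (sub_nonneg.2 ((le_div_iff₀ hL).2 ?_))
    linarith [mul_le_mul_of_nonneg_left (sub_le_sub_right hν₂ νmin) (mul_nonneg hα hL.le),
      min_le_left (-νmin) νmax]
  · rw [dHLLX_add_self_of_neg_of_pos hmin hmax]
    refine mul_nonneg (by linarith) (sub_nonneg.2 ((le_div_iff₀ hL).2 ?_))
    linarith [mul_le_mul_of_nonneg_left (sub_le_sub_left hν₁ νmax) (mul_nonneg hα hL.le),
      min_le_right (-νmin) νmax]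

end

/-- The HLLX dissipation lies above the upwind dissipation `|ν|` on the whole
wave-speed interval, so the HLLX scheme is monotone there. -/
theorem hllx_monotone (νmin νmax : ℝ) (h : νmin < νmax) :
    ∀ ν ∈ Set.Icc νmin νmax, |ν| ≤ dHLLX νmin νmax ν := by
  intro ν hν
  rcases le_or_gt 0 νmin with h0 | hmin
  · rw [dHLLX_of_nonneg h h0, abs_of_nonneg (h0.trans hν.1)]
  rcases le_or_gt νmax 0 with h0 | hmax
  · rw [dHLLX_of_nonpos h h0, abs_of_nonpos (hν.2.trans h0)]
  exact abs_le_dHLLX_of_neg_of_pos hmin hmax hν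
end

section
/- Let ν_min < ν_max be real numbers with max(|ν_min|, |ν_max|) ≤ 1 (CFL condition) and let ω ∈ [0,1]. Then for every ν ∈ [ν_min, ν_max] one has the chain of inequalities ν² ≤ d_ω(ν) ≤ d_HLLω(ν) ≤ d_HLL(ν); i.e. the HLLω scheme is L² stable and less dissipative than the HLL scheme on the whole wave-speed interval. -/
/-- The blended (upwind / Lax–Wendroff) dissipation function `d_ω`. -/
noncomputable def dOmega (ω ν : ℝ) : ℝ := ω * ν^2 + (1 - ω) * |ν|

/-- Coefficient `b₀(ω)` of the HLLω dissipation function. -/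
noncomputable def b0 (νmin νmax ω : ℝ) : ℝ :=
  (νmax * (ω * νmin^2 + (1 - ω) * |νmin|)
    - νmin * (ω * νmax^2 + (1 - ω) * |νmax|)) / (νmax - νmin)

/-- Coefficient `b₁(ω)` of the HLLω dissipation function. -/
noncomputable def b1 (νmin νmax ω : ℝ) : ℝ :=
  ((1 - ω) * (|νmax| - |νmin|) + ω * (νmax^2 - νmin^2)) / (νmax - νmin)

/-- The affine HLLω dissipation function. -/
noncomputable def dHLLomega (νmin νmax ω ν : ℝ) : ℝ :=
  b0 νmin νmax ω + b1 νmin νmax ω * ν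

/-! `d_HLLω` and `d_HLL` are the chords over `[ν_min, ν_max]` of `d_ω` and of `|·|`. The CFL
condition gives `|ν| ≤ 1`, hence `ν² ≤ |ν|` and so `ν² ≤ d_ω(ν) ≤ |ν|`, on the whole interval. The
middle inequality is convexity of `d_ω` (for `ω ∈ [0, 1]`), and the last one compares the two chords
through their values at the endpoints. -/

open Set

noncomputable def chord (f : ℝ → ℝ) (a b x : ℝ) : ℝ :=
  ((b - x) * f a + (x - a) * f b) / (b - a)

theorem ConvexOn.le_chord {f : ℝ → ℝ} {a b x : ℝ} (hf : ConvexOn ℝ (Icc a b) f) (hab : a < b)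
    (hx : x ∈ Icc a b) : f x ≤ chord f a b x := by
  have hba : 0 < b - a := sub_pos.2 hab
  have hcomb : ((b - x) / (b - a)) • a + ((x - a) / (b - a)) • b = x := by
    simp only [smul_eq_mul]; field_simp; ring
  have hsum : (b - x) / (b - a) + (x - a) / (b - a) = 1 := by field_simp; ring
  calc f x = f (((b - x) / (b - a)) • a + ((x - a) / (b - a)) • b) := by rw [hcomb]
    _ ≤ ((b - x) / (b - a)) • f a + ((x - a) / (b - a)) • f b :=
      hf.2 (left_mem_Icc.2 hab.le) (right_mem_Icc.2 hab.le)
        (div_nonneg (sub_nonneg.2 hx.2) hba.le) (div_nonneg (sub_nonneg.2 hx.1) hba.le) hsum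
    _ = chord f a b x := by simp only [smul_eq_mul, chord]; field_simp

theorem chord_mono {f g : ℝ → ℝ} {a b x : ℝ} (hab : a < b) (hx : x ∈ Icc a b)
    (ha : f a ≤ g a) (hb : f b ≤ g b) : chord f a b x ≤ chord g a b x := by
  unfold chord
  gcongr <;> linarith [hx.1, hx.2]

theorem dHLLomega_eq_chord {νmin νmax : ℝ} (ω ν : ℝ) (h : νmin ≠ νmax) :
    dHLLomega νmin νmax ω ν = chord (dOmega ω) νmin νmax ν := by
  have : νmax - νmin ≠ 0 := sub_ne_zero.2 h.symm
  unfold dHLLomega b0 b1 chord dOmega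
  field_simp
  ring

theorem dHLL_eq_chord {νmin νmax : ℝ} (ν : ℝ) (h : νmin ≠ νmax) :
    dHLL νmin νmax ν = chord (|·|) νmin νmax ν := by
  have : νmax - νmin ≠ 0 := sub_ne_zero.2 h.symm
  unfold dHLL chord
  field_simp
  ring

theorem convexOn_dOmega {ω : ℝ} (hω : ω ∈ Icc (0 : ℝ) 1) : ConvexOn ℝ univ (dOmega ω) :=
  ((even_two.convexOn_pow).smul hω.1).add ((convexOn_univ_norm).smul (sub_nonneg.2 hω.2))

theorem sq_le_abs_of_abs_le_one {ν : ℝ} (hν : |ν| ≤ 1) : ν ^ 2 ≤ |ν| := by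
  rw [← sq_abs, sq]
  exact mul_le_of_le_one_left (abs_nonneg ν) hν

theorem sq_le_dOmega {ω ν : ℝ} (hω : ω ≤ 1) (hν : |ν| ≤ 1) : ν ^ 2 ≤ dOmega ω ν := by
  unfold dOmega
  nlinarith [sq_le_abs_of_abs_le_one hν]

theorem dOmega_le_abs {ω ν : ℝ} (hω : 0 ≤ ω) (hν : |ν| ≤ 1) : dOmega ω ν ≤ |ν| := by
  unfold dOmega
  nlinarith [sq_le_abs_of_abs_le_one hν]

/-- Under the CFL condition, HLLω is L² stable and less dissipative than HLL:
`ν² ≤ d_ω(ν) ≤ d_HLLω(ν) ≤ d_HLL(ν)` on the whole wave-speed interval. -/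
theorem hllomega_stable_and_le_hll (νmin νmax ω : ℝ) (h : νmin < νmax)
    (hcfl : max |νmin| |νmax| ≤ 1) (hω : ω ∈ Set.Icc (0:ℝ) 1) :
    ∀ ν ∈ Set.Icc νmin νmax,
      ν^2 ≤ dOmega ω ν ∧ dOmega ω ν ≤ dHLLomega νmin νmax ω ν ∧
        dHLLomega νmin νmax ω ν ≤ dHLL νmin νmax ν := by
  intro ν hν
  have habs_le_one : ∀ x ∈ Icc νmin νmax, |x| ≤ 1 :=
    fun x hx ↦ (abs_le_max_abs_abs hx.1 hx.2).trans hcfl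
  have hmin := habs_le_one νmin (left_mem_Icc.2 h.le)
  have hmax := habs_le_one νmax (right_mem_Icc.2 h.le)
  rw [dHLLomega_eq_chord ω ν h.ne, dHLL_eq_chord ν h.ne]
  refine ⟨sq_le_dOmega hω.2 (habs_le_one ν hν), ?_, ?_⟩
  · exact ((convexOn_dOmega hω).subset (subset_univ _) (convex_Icc _ _)).le_chord h hν
  · exact chord_mono h hν (dOmega_le_abs hω.1 hmin) (dOmega_le_abs hω.1 hmax)
end

section
/- Let ν_min < ν_max be real numbers, ω ∈ [0,1], and let ν̄ = ν_max if |ν_max| ≥ |ν_min|, else ν̄ = ν_min. The HLLXω dissipation function d_HLLXω(ν) = d_HLLω(ν) + β(ω)·(ν − ν_min)(ν − ν_max), with β(ω) = ω + (1−ω)·α and α = (ν_max − ν_min − | |ν_max| − |ν_min| |)/(ν_max − ν_min)², satisfies the three defining conditions d_HLLXω(ν_min) = d_ω(ν_min), d_HLLXω(ν_max) = d_ω(ν_max), and d_HLLXω′(ν̄) = 2ω·ν̄ + (1−ω)·sign(ν̄) = d_ω′(ν̄), where d_ω(ν) = ω·ν² + (1−ω)·|ν|. -/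
/-- The coefficient `β(ω) = ω + (1−ω)·α`. -/
noncomputable def betaHLLX (νmin νmax ω : ℝ) : ℝ :=
  ω + (1 - ω) * alphaHLLX νmin νmax

/-- The HLLXω scalar dissipation function. -/
noncomputable def dHLLXomega (νmin νmax ω ν : ℝ) : ℝ :=
  dHLLomega νmin νmax ω ν + betaHLLX νmin νmax ω * (ν - νmin) * (ν - νmax)

/-! `d_HLLω` is the secant of `d_ω` through the extreme wave speeds and the quadratic correction
vanishes there, which gives the two value conditions. At `ν̄ = ν_max > 0` the slope of `d_HLLXω`
is the secant slope plus `β (ν_max − ν_min)`; since `||ν_max| − |ν_min|| = |ν_max| − |ν_min|`, the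
`α`-part of `β` exactly replaces the secant slope of `|ν|` by the slope `1` of `|ν|` at `ν_max`,
while the `ω`-part turns the secant slope `ν_max + ν_min` of `ν²` into `2 ν_max`. The case
`ν̄ = ν_min < 0` is symmetric. -/

section HLLX

variable {νmin νmax ω : ℝ}

lemma pos_of_lt_of_abs_le_abs_s12 (h : νmin < νmax) (hle : |νmin| ≤ |νmax|) : 0 < νmax := by
  by_contra! hmax
  rw [abs_of_nonpos hmax, abs_of_nonpos (h.le.trans hmax)] at hle
  linarith

lemma neg_of_lt_of_abs_lt_abs_s12 (h : νmin < νmax) (hlt : |νmax| < |νmin|) : νmin < 0 := by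
  by_contra! hmin
  rw [abs_of_nonneg hmin, abs_of_nonneg (hmin.trans h.le)] at hlt
  linarith

lemma nuBar_ne_zero (h : νmin < νmax) : nuBar νmin νmax ≠ 0 := by
  unfold nuBar
  split_ifs with hge
  · exact (pos_of_lt_of_abs_le_abs_s12 h hge).ne'
  · exact (neg_of_lt_of_abs_lt_abs_s12 h (not_le.mp hge)).ne

lemma hasDerivAt_dOmega {x : ℝ} (hx : x ≠ 0) :
    HasDerivAt (dOmega ω) (2 * ω * x + (1 - ω) * Real.sign x) x := by
  have hsq : HasDerivAt (fun ν : ℝ => ω * ν ^ 2) (ω * (2 * x)) x := by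
    simpa using (hasDerivAt_pow 2 x).const_mul ω
  rcases hx.lt_or_gt with hneg | hpos
  · rw [Real.sign_of_neg hneg]
    exact (hsq.add ((hasDerivAt_abs_neg hneg).const_mul (1 - ω))).congr_deriv (by ring)
  · rw [Real.sign_of_pos hpos]
    exact (hsq.add ((hasDerivAt_abs_pos hpos).const_mul (1 - ω))).congr_deriv (by ring)

lemma dHLLomega_eq_secant (h : νmin ≠ νmax) (ν : ℝ) :
    dHLLomega νmin νmax ω ν
      = dOmega ω νmin + (dOmega ω νmax - dOmega ω νmin) / (νmax - νmin) * (ν - νmin) := by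
  have hΔ : νmax - νmin ≠ 0 := sub_ne_zero.mpr h.symm
  simp only [dHLLomega, b0, b1, dOmega]
  field_simp
  ring

lemma dHLLXomega_left (h : νmin ≠ νmax) : dHLLXomega νmin νmax ω νmin = dOmega ω νmin := by
  simp [dHLLXomega, dHLLomega_eq_secant h]

lemma dHLLXomega_right (h : νmin ≠ νmax) : dHLLXomega νmin νmax ω νmax = dOmega ω νmax := by
  have hΔ : νmax - νmin ≠ 0 := sub_ne_zero.mpr h.symm
  simp [dHLLXomega, dHLLomega_eq_secant h, div_mul_cancel₀ _ hΔ]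

lemma hasDerivAt_dHLLXomega (x : ℝ) :
    HasDerivAt (dHLLXomega νmin νmax ω)
      (b1 νmin νmax ω + betaHLLX νmin νmax ω * ((x - νmin) + (x - νmax))) x := by
  have hline := ((hasDerivAt_id x).const_mul (b1 νmin νmax ω)).const_add (b0 νmin νmax ω)
  have hquad := (((hasDerivAt_id x).sub_const νmin).const_mul (betaHLLX νmin νmax ω)).mul
    ((hasDerivAt_id x).sub_const νmax)
  exact (hline.add hquad).congr_deriv (by simp only [id_eq]; ring)

lemma b1_add_betaHLLX_mul_of_abs_le (h : νmin < νmax) (hle : |νmin| ≤ |νmax|) :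
    b1 νmin νmax ω + betaHLLX νmin νmax ω * (νmax - νmin) = 2 * ω * νmax + (1 - ω) := by
  have hΔ : νmax - νmin ≠ 0 := sub_ne_zero.mpr h.ne'
  rw [b1, betaHLLX, alphaHLLX, abs_of_nonneg (sub_nonneg.mpr hle)]
  field_simp
  ring

lemma b1_sub_betaHLLX_mul_of_abs_lt (h : νmin < νmax) (hlt : |νmax| < |νmin|) :
    b1 νmin νmax ω - betaHLLX νmin νmax ω * (νmax - νmin) = 2 * ω * νmin - (1 - ω) := by
  have hΔ : νmax - νmin ≠ 0 := sub_ne_zero.mpr h.ne'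
  rw [b1, betaHLLX, alphaHLLX, abs_of_neg (sub_neg.mpr hlt)]
  field_simp
  ring

lemma hasDerivAt_dHLLXomega_nuBar (h : νmin < νmax) :
    HasDerivAt (dHLLXomega νmin νmax ω)
      (2 * ω * nuBar νmin νmax + (1 - ω) * Real.sign (nuBar νmin νmax)) (nuBar νmin νmax) := by
  unfold nuBar
  split_ifs with hge
  · rw [Real.sign_of_pos (pos_of_lt_of_abs_le_abs_s12 h hge)]
    refine (hasDerivAt_dHLLXomega νmax).congr_deriv ?_
    linear_combination b1_add_betaHLLX_mul_of_abs_le (ω := ω) h hge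
  · have hlt := not_le.mp hge
    rw [Real.sign_of_neg (neg_of_lt_of_abs_lt_abs_s12 h hlt)]
    refine (hasDerivAt_dHLLXomega νmin).congr_deriv ?_
    linear_combination b1_sub_betaHLLX_mul_of_abs_lt (ω := ω) h hlt

end HLLX

theorem hllxomega_defining_conditions_general (νmin νmax ω : ℝ) (h : νmin < νmax) :
    dHLLXomega νmin νmax ω νmin = dOmega ω νmin ∧
    dHLLXomega νmin νmax ω νmax = dOmega ω νmax ∧
    deriv (dHLLXomega νmin νmax ω) (nuBar νmin νmax)
      = 2 * ω * nuBar νmin νmax + (1 - ω) * Real.sign (nuBar νmin νmax) ∧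
    deriv (dOmega ω) (nuBar νmin νmax)
      = 2 * ω * nuBar νmin νmax + (1 - ω) * Real.sign (nuBar νmin νmax) :=
  ⟨dHLLXomega_left h.ne, dHLLXomega_right h.ne, (hasDerivAt_dHLLXomega_nuBar h).deriv,
    (hasDerivAt_dOmega (nuBar_ne_zero h)).deriv⟩

/-- HLLXω matches the blended dissipation `d_ω` in value at both extreme wave
speeds, and in slope at the globally fastest wave speed, where the common slope
equals `2ω·ν̄ + (1−ω)·sign(ν̄)`. -/
theorem hllxomega_defining_conditions (νmin νmax ω : ℝ) (h : νmin < νmax)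
    (hω : ω ∈ Set.Icc (0:ℝ) 1) :
    dHLLXomega νmin νmax ω νmin = dOmega ω νmin ∧
    dHLLXomega νmin νmax ω νmax = dOmega ω νmax ∧
    deriv (dHLLXomega νmin νmax ω) (nuBar νmin νmax)
      = 2 * ω * nuBar νmin νmax + (1 - ω) * Real.sign (nuBar νmin νmax) ∧
    deriv (dOmega ω) (nuBar νmin νmax)
      = 2 * ω * nuBar νmin νmax + (1 - ω) * Real.sign (nuBar νmin νmax) :=
  hllxomega_defining_conditions_general νmin νmax ω h
end

section
/- Assume ν_min < 0 < ν_max and ω ∈ [0,1]. With β(ω) = ω + (1−ω)·α, β₀(ω) = β(ω)·(1−ω)·|ν_min·ν_max| / ((1−ω) + ω·(|ν_min| + |ν_max|)), β₁(ω) = 1 − β(ω)·((1−ω)/(|ν_min| + |ν_max|) + ω)⁻¹, and β₂(ω) = β(ω), the two representations of the HLLXω dissipation function coincide for every real ν: β₀(ω)·1 + β₁(ω)·d_HLLω(ν) + β₂(ω)·ν² = d_HLLω(ν) + β(ω)·(ν − ν_min)(ν − ν_max); i.e. HLLXω is the weighted combination β₀·d_LF + β₁·d_HLLω + β₂·d_LW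 of the Lax–Friedrichs, HLLω, and Lax–Wendroff dissipation functions. -/
/-!
`d_HLLω` is the chord of `d_ω = ω ν² + (1 - ω)|ν|` through `ν_min` and `ν_max`. When
`ν_min < 0 < ν_max`, the chord of `|ν|` is the chord `q(ν) = ν² - (ν - ν_min)(ν - ν_max)` of `ν²`
divided by `s = |ν_min| + |ν_max|`, plus `|ν_min ν_max| / s`, so
`d_HLLω = c q + (1 - ω)|ν_min ν_max| / s` with `c = (1 - ω)/s + ω`.
Both sides of the claim are then affine in `d_HLLω` and `q`, and the `q`-terms cancel;
what remains is `β₀ = β (1 - ω)|ν_min ν_max| / (c s)`, which is the definition of `β₀`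
because `(1 - ω) + ω s = c s`.
-/

theorem dHLLomega_eq_of_neg_of_pos {νmin νmax : ℝ} (hmin : νmin < 0) (hmax : 0 < νmax)
    (ω ν : ℝ) :
    dHLLomega νmin νmax ω ν
      = ((1 - ω) / (|νmin| + |νmax|) + ω) * (ν ^ 2 - (ν - νmin) * (ν - νmax))
        + (1 - ω) * |νmin * νmax| / (|νmin| + |νmax|) := by
  have hs : νmax - νmin ≠ 0 := by linarith
  have hs' : -νmin + νmax ≠ 0 := by linarith
  rw [dHLLomega, b0, b1, abs_mul, abs_of_neg hmin, abs_of_pos hmax]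
  field_simp
  ring

/-- HLLXω is the weighted combination `β₀·d_LF + β₁·d_HLLω + β₂·d_LW` of the
Lax–Friedrichs (`1`), HLLω, and Lax–Wendroff (`ν²`) dissipation functions. -/
theorem hllxomega_weighted_combination (νmin νmax ω : ℝ)
    (hmin : νmin < 0) (hmax : 0 < νmax) (hω : ω ∈ Set.Icc (0:ℝ) 1) :
    ∀ ν : ℝ,
      (betaHLLX νmin νmax ω * (1 - ω) * |νmin * νmax|
          / ((1 - ω) + ω * (|νmin| + |νmax|))) * 1
        + (1 - betaHLLX νmin νmax ω * ((1 - ω) / (|νmin| + |νmax|) + ω)⁻¹)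
            * dHLLomega νmin νmax ω ν
        + betaHLLX νmin νmax ω * ν^2
      = dHLLomega νmin νmax ω ν
          + betaHLLX νmin νmax ω * (ν - νmin) * (ν - νmax) := by
  intro ν
  rw [dHLLomega_eq_of_neg_of_pos hmin hmax]
  set s := |νmin| + |νmax|
  have hs : 0 < s := by positivity
  have hc : 0 < (1 - ω) / s + ω := by
    rcases hω.2.lt_or_eq with hω1 | rfl
    · linarith [div_pos (sub_pos.2 hω1) hs, hω.1]
    · norm_num
  have hden : (1 - ω) + ω * s = ((1 - ω) / s + ω) * s := by field_simp
  rw [hden]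
  generalize (1 - ω) / s + ω = c at hc ⊢
  field_simp
  ring
end

section
/- Let ν_min < ν_max be real numbers with max(|ν_min|, |ν_max|) ≤ 1 (CFL condition) and let ω ∈ [0,1]. Then for every ν ∈ [ν_min, ν_max] one has d_ω(ν) ≤ d_HLLXω(ν) ≤ d_HLLX(ν), and in particular ν² ≤ d_HLLXω(ν); i.e. the HLLXω scheme is L² stable, its dissipation never drops below the blended function d_ω, and it is less dissipative than the monotone HLLX scheme on the whole wave-speed interval. -/
/-!
The HLLXω function is the convex combination `ω ν² + (1 - ω) d_HLLX(ν)` of the Lax–Wendroff and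
HLLX dissipation functions, so everything reduces to `|ν| ≤ d_HLLX(ν)` on `[ν_min, ν_max]`
together with `ν² ≤ |ν|` under the CFL condition. The reflection `ν ↦ -ν` preserves `d_HLLX`, so
we may assume `|ν_min| ≤ ν_max`. If `ν_min ≥ 0` then `d_HLLX(ν) = ν`; otherwise `d_HLLX(ν) - ν`
and `d_HLLX(ν) + ν` factor into visibly nonnegative expressions (`d_HLLX` touches `ν` at `ν_max`
and `-ν` at `ν_min`).
-/

lemma dHLLX_neg_neg (νmin νmax ν : ℝ) : dHLLX (-νmax) (-νmin) (-ν) = dHLLX νmin νmax ν := by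
  unfold dHLLX dHLL alphaHLLX
  rw [abs_neg, abs_neg, abs_sub_comm]
  ring

lemma dHLLX_eq_self_of_nonneg {νmin νmax : ℝ} (h : νmin < νmax) (hmin : 0 ≤ νmin) (ν : ℝ) :
    dHLLX νmin νmax ν = ν := by
  have hL : νmax - νmin ≠ 0 := sub_ne_zero.2 h.ne'
  unfold dHLLX dHLL alphaHLLX
  rw [abs_of_nonneg hmin, abs_of_nonneg (hmin.trans h.le), abs_of_nonneg (sub_nonneg.2 h.le)]
  field_simp
  ring

section MixedSigns

variable {νmin νmax : ℝ} (hmin : νmin < 0) (hs : -νmin ≤ νmax)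
include hmin hs

lemma dHLLX_sub_self_of_mixed (ν : ℝ) :
    dHLLX νmin νmax ν - ν = -2 * νmin * (ν - νmax) ^ 2 / (νmax - νmin) ^ 2 := by
  have hL : νmax - νmin ≠ 0 := by linarith
  unfold dHLLX dHLL alphaHLLX
  rw [abs_of_neg hmin, abs_of_nonneg (by linarith : 0 ≤ νmax),
    abs_of_nonneg (by linarith : 0 ≤ νmax - -νmin)]
  field_simp
  ring

lemma dHLLX_add_self_of_mixed (ν : ℝ) :
    dHLLX νmin νmax ν + ν = 2 * (ν - νmin) * (νmax ^ 2 - νmin * ν) / (νmax - νmin) ^ 2 := by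
  have hL : νmax - νmin ≠ 0 := by linarith
  unfold dHLLX dHLL alphaHLLX
  rw [abs_of_neg hmin, abs_of_nonneg (by linarith : 0 ≤ νmax),
    abs_of_nonneg (by linarith : 0 ≤ νmax - -νmin)]
  field_simp
  ring

end MixedSigns

lemma abs_le_dHLLX_of_neg_le {νmin νmax ν : ℝ} (h : νmin < νmax) (hs : -νmin ≤ νmax)
    (h1 : νmin ≤ ν) (h2 : ν ≤ νmax) : |ν| ≤ dHLLX νmin νmax ν := by
  rcases le_or_gt 0 νmin with hmin | hmin
  · rw [dHLLX_eq_self_of_nonneg h hmin, abs_of_nonneg (hmin.trans h1)]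
  rw [abs_le']
  constructor
  · rw [← sub_nonneg, dHLLX_sub_self_of_mixed hmin hs]
    have : 0 ≤ -2 * νmin := by linarith
    positivity
  · rw [neg_le_iff_add_nonneg, dHLLX_add_self_of_mixed hmin hs]
    have : 0 ≤ ν - νmin := by linarith
    have : 0 ≤ νmax ^ 2 - νmin * ν := by nlinarith
    positivity

lemma abs_le_dHLLX {νmin νmax ν : ℝ} (h : νmin < νmax) (h1 : νmin ≤ ν) (h2 : ν ≤ νmax) :
    |ν| ≤ dHLLX νmin νmax ν := by
  rcases le_total (-νmin) νmax with hs | hs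
  · exact abs_le_dHLLX_of_neg_le h hs h1 h2
  · have := abs_le_dHLLX_of_neg_le (neg_lt_neg h) (by linarith) (neg_le_neg h2) (neg_le_neg h1)
    rwa [abs_neg, dHLLX_neg_neg] at this

lemma dHLLXomega_eq {νmin νmax : ℝ} (h : νmin ≠ νmax) (ω ν : ℝ) :
    dHLLXomega νmin νmax ω ν = ω * ν ^ 2 + (1 - ω) * dHLLX νmin νmax ν := by
  have hL : νmax - νmin ≠ 0 := sub_ne_zero.2 h.symm
  unfold dHLLXomega dHLLomega b0 b1 betaHLLX dHLLX dHLL alphaHLLX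
  field_simp
  ring

/-- Under the CFL condition, HLLXω is L² stable, never drops below the blended
dissipation `d_ω`, and is less dissipative than the monotone HLLX scheme on the
whole wave-speed interval. -/
theorem hllxomega_stable_and_le_hllx (νmin νmax ω : ℝ) (h : νmin < νmax)
    (hcfl : max |νmin| |νmax| ≤ 1) (hω : ω ∈ Set.Icc (0:ℝ) 1) :
    ∀ ν ∈ Set.Icc νmin νmax,
      dOmega ω ν ≤ dHLLXomega νmin νmax ω ν ∧
      dHLLXomega νmin νmax ω ν ≤ dHLLX νmin νmax ν ∧
      ν^2 ≤ dHLLXomega νmin νmax ω ν := by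
  rintro ν ⟨h1, h2⟩
  obtain ⟨hω0, hω1⟩ := hω
  have hX : |ν| ≤ dHLLX νmin νmax ν := abs_le_dHLLX h h1 h2
  have hsq : ν ^ 2 ≤ |ν| := by
    rw [← sq_abs]
    exact sq_le (abs_nonneg ν) ((abs_le_max_abs_abs h1 h2).trans hcfl)
  rw [dHLLXomega_eq h.ne]
  unfold dOmega
  refine ⟨?_, ?_, ?_⟩ <;> nlinarith
end
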